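/- arXiv:2102.13075 — 2 statements merged into one kernel-verified Lean document; each statement's English description precedes it below -/
import Mathlib

section
/- For every upper expectation tree Q̄ there exists a global upper expectation Ē* satisfying axioms P1–P5, and Ē* is the most conservative such model: every global upper expectation Ē satisfying P1–P5 satisfies Ē(f|s) ≤ Ē*(f|s) for all global variables f: Ω → ℝ̄ and all situations s. -/
open Filter MeasureTheory Topology
open scoped ENNReal

namespace UEPaper

variable {X : Type} [Fintype X] [Nonempty X] [DecidableEq X]

/-- The set of paths: infinite sequences of states (`ω i` is the `(i+1)`-th state). -/
abbrev Path (X : Type) := ℕ → X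

/-- The prefix `ω^k` of length `k` of a path, as a list (a situation). -/
def prefixList (ω : Path X) (k : ℕ) : List X := (List.range k).map ω

/-- The cylinder event `Γ(s)` of a situation `s`. -/
def cyl (s : List X) : Set (Path X) := {ω | prefixList ω s.length = s}

/-- `f` is `n`-measurable: it depends only on the first `n` states. -/
def NMeas (n : ℕ) (f : Path X → EReal) : Prop :=
  ∀ ω ω' : Path X, prefixList ω n = prefixList ω' n → f ω = f ω'

/-- A gamble: a bounded real-valued global variable. -/
def IsGamble (f : Path X → EReal) : Prop :=
  ∃ B : ℝ, ∀ ω, -(B : EReal) ≤ f ω ∧ f ω ≤ (B : EReal)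

/-- A finitary gamble: an `n`-measurable gamble for some `n`. -/
def IsFinGamble (f : Path X → EReal) : Prop :=
  (∃ n, NMeas n f) ∧ IsGamble f

/-- An upper expectation tree: a coherent upper expectation at each situation. -/
structure UpperExpTree (X : Type) [Fintype X] [Nonempty X] where
  Q : List X → (X → ℝ) → ℝ
  le_sup : ∀ (s : List X) (f : X → ℝ), Q s f ≤ ⨆ x, f x
  subadd : ∀ (s : List X) (f g : X → ℝ), Q s (f + g) ≤ Q s f + Q s g
  pos_homog : ∀ (s : List X) (l : ℝ) (f : X → ℝ), 0 ≤ l → Q s (l • f) = l * Q s f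

/-- A (real-valued) supermartingale for the upper expectation tree `Q`. -/
def IsSupermart (Q : UpperExpTree X) (M : List X → ℝ) : Prop :=
  ∀ s : List X, Q.Q s (fun x => M (s ++ [x])) ≤ M s

/-- The game-theoretic upper expectation of a real-valued variable (used on gambles):
the infimum of `M s` over bounded-below supermartingales `M` with
`liminf_k M(ω^k) ≥ f(ω)` on `Γ(s)`. -/
noncomputable def gtG (Q : UpperExpTree X) (f : Path X → ℝ) (s : List X) : EReal :=
  sInf {a : EReal | ∃ M : List X → ℝ, IsSupermart Q M ∧ (∃ B : ℝ, ∀ t, B ≤ M t) ∧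
    (∀ ω ∈ cyl s,
      (f ω : EReal) ≤ Filter.liminf (fun k => ((M (prefixList ω k) : ℝ) : EReal)) atTop) ∧
    a = ((M s : ℝ) : EReal)}

/-- Extension to bounded-below variables, by continuity w.r.t. upper cuts:
`Ē(f|s) = lim_{c → +∞} Ē(min(f,c)|s)` (the limit of this nondecreasing net is a supremum). -/
noncomputable def gtBB (Q : UpperExpTree X) (f : Path X → EReal) (s : List X) : EReal :=
  ⨆ c : ℝ, gtG Q (fun ω => (f ω ⊓ (c : EReal)).toReal) s

/-- The game-theoretic global upper expectation `Ē_Q̄`, extended to all extended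
real variables by continuity w.r.t. lower cuts:
`Ē(f|s) = lim_{c → −∞} Ē(max(f,c)|s)` (the limit of this nonincreasing net is an infimum). -/
noncomputable def gtUE (Q : UpperExpTree X) (f : Path X → EReal) (s : List X) : EReal :=
  ⨅ c : ℝ, gtBB Q (fun ω => f ω ⊔ (c : EReal)) s

/-- A precise probability tree: a probability mass function at each situation. -/
structure PreciseTree (X : Type) [Fintype X] where
  p : List X → X → ℝ
  nonneg : ∀ (s : List X) (x : X), 0 ≤ p s x
  sum_one : ∀ s : List X, ∑ x, p s x = 1

/-- An imprecise probability tree: a nonempty closed convex set of probability mass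
functions at each situation. -/
structure ImpreciseTree (X : Type) [Fintype X] where
  sets : List X → Set (X → ℝ)
  nonempty' : ∀ s : List X, (sets s).Nonempty
  closed' : ∀ s : List X, IsClosed (sets s)
  convex' : ∀ s : List X, Convex ℝ (sets s)
  prob' : ∀ s : List X, ∀ q ∈ sets s, (∀ x, 0 ≤ q x) ∧ ∑ x, q x = 1

/-- `p ∼ 𝒫`: the precise tree `p` is compatible with the imprecise tree `P`. -/
def Compatible (p : PreciseTree X) (P : ImpreciseTree X) : Prop :=
  ∀ s : List X, p.p s ∈ P.sets s

/-- The probability `P_p(Γ(z)|s)` of the cylinder of `z` conditional on situation `s`. -/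
noncomputable def cylProb (p : List X → X → ℝ) (s z : List X) : ℝ :=
  if s.length < z.length ∧ z.take s.length = s then
    ∏ i ∈ Finset.Ico s.length z.length, p (z.take i) (z.getD i (Classical.arbitrary X))
  else if z.length ≤ s.length ∧ s.take z.length = z then 1 else 0

/-- The σ-algebra `ℱ` on paths generated by the cylinder events. -/
instance cylSigma : MeasurableSpace (Path X) :=
  MeasurableSpace.generateFrom {A | ∃ s : List X, A = cyl s}

/-- `μ` is the probability measure `P_p(·|s)` on `ℱ` determined by the tree `p`. -/
def IsTreeMeasure (p : PreciseTree X) (s : List X) (μ : Measure (Path X)) : Prop :=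
  IsProbabilityMeasure μ ∧ ∀ z : List X, μ (cyl z) = ENNReal.ofReal (cylProb p.p s z)

/-- Positive part of an extended real, in `ℝ≥0∞`. -/
noncomputable def posPart (x : EReal) : ℝ≥0∞ := if x = ⊤ then ⊤ else ENNReal.ofReal x.toReal

/-- The Lebesgue integral `∫ g dμ = ∫ g⁺ dμ − ∫ g⁻ dμ` of an extended-real variable
(well-defined, with value in `(-∞, +∞]`, for bounded-below measurable `g`). -/
noncomputable def integralE (μ : Measure (Path X)) (g : Path X → EReal) : EReal :=
  ((∫⁻ ω, posPart (g ω) ∂μ : ℝ≥0∞) : EReal) - ((∫⁻ ω, posPart (-(g ω)) ∂μ : ℝ≥0∞) : EReal)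

/-- The upper integral `Ē_p(f|s)`: infimum of integrals of bounded-below
`ℱ`-measurable variables dominating `f`. -/
noncomputable def upperInt (μ : Measure (Path X)) (f : Path X → EReal) : EReal :=
  sInf {a : EReal | ∃ g : Path X → EReal, Measurable g ∧ (∃ B : ℝ, ∀ ω, (B : EReal) ≤ g ω) ∧
    (∀ ω, f ω ≤ g ω) ∧ a = integralE μ g}

/-- The measure-theoretic global upper expectation `Ē_𝒫(f|s)`, given the assignment
`Pm` of the measures `P_p(·|s)` to precise trees: the upper envelope of the upper
integrals over all compatible precise trees. -/
noncomputable def muUE (Pm : PreciseTree X → List X → Measure (Path X))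
    (P : ImpreciseTree X) (f : Path X → EReal) (s : List X) : EReal :=
  ⨆ (p : PreciseTree X) (_ : Compatible p P), upperInt (Pm p s) f

/-- The trees `P` and `Q` agree: each `Q̄_s` is the upper envelope of the expectations
corresponding to the credal set `𝒫_s`. -/
def Agree (P : ImpreciseTree X) (Q : UpperExpTree X) : Prop :=
  ∀ (s : List X) (f : X → ℝ),
    Q.Q s f = sSup {r : ℝ | ∃ q ∈ P.sets s, r = ∑ x, f x * q x}

/-- Axioms P1–P5 for a global upper expectation `E` w.r.t. the tree `Q`. -/
structure Axioms (Q : UpperExpTree X) (E : (Path X → EReal) → List X → EReal) : Prop where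
  p1 : ∀ (f : X → ℝ) (s : List X),
    E (fun ω => ((f (ω s.length) : ℝ) : EReal)) s = ((Q.Q s f : ℝ) : EReal)
  p2 : ∀ f : Path X → EReal, IsFinGamble f → ∀ s : List X, E f s = E ((cyl s).indicator f) s
  p3 : ∀ f : Path X → EReal, IsFinGamble f → ∀ s : List X,
    E f s ≤ E (fun ω => E f (prefixList ω (s.length + 1))) s
  p4 : ∀ f g : Path X → EReal, (∀ ω, f ω ≤ g ω) → ∀ s : List X, E f s ≤ E g s
  p5 : ∀ (s : List X) (fn : ℕ → Path X → EReal) (f : Path X → EReal),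
    (∀ n, IsFinGamble (fn n)) → (∃ B : ℝ, ∀ n ω, (B : EReal) ≤ fn n ω) →
    (∀ ω, Tendsto (fun n => fn n ω) atTop (nhds (f ω))) →
    E f s ≤ limsup (fun n => E (fn n) s) atTop

/-- Upper semicontinuity of an extended-real variable on the path space. -/
def USC [TopologicalSpace X] [DiscreteTopology X] (f : Path X → EReal) : Prop :=
  ∀ a : ℝ, IsOpen {ω : Path X | f ω < (a : EReal)}

/-- An `Ω`-capacity (Dellacherie): a monotone `[0,∞]`-valued functional on nonnegative
variables, continuous along nondecreasing sequences, and continuous along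
nonincreasing sequences of nonnegative real-valued upper semicontinuous functions. -/
def IsCapacity [TopologicalSpace X] [DiscreteTopology X]
    (F : (Path X → EReal) → EReal) : Prop :=
  (∀ f : Path X → EReal, (∀ ω, 0 ≤ f ω) → 0 ≤ F f) ∧
  (∀ f g : Path X → EReal, (∀ ω, 0 ≤ f ω) → (∀ ω, 0 ≤ g ω) → (∀ ω, f ω ≤ g ω) → F f ≤ F g) ∧
  (∀ fn : ℕ → Path X → EReal, (∀ n ω, 0 ≤ fn n ω) → Monotone fn →
    Tendsto (fun n => F (fn n)) atTop (nhds (F (fun ω => ⨆ n, fn n ω)))) ∧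
  (∀ fn : ℕ → Path X → EReal, (∀ n ω, 0 ≤ fn n ω ∧ fn n ω < ⊤) → (∀ n, USC (fn n)) →
    Antitone fn →
    Tendsto (fun n => F (fn n)) atTop (nhds (F (fun ω => ⨅ n, fn n ω))))

open Classical in
/-- The metric `δ(ω,ω') = 2^{-n}`, `n` the first (1-based) index where `ω` and `ω'` differ. -/
noncomputable def delta (ω ω' : Path X) : ℝ :=
  if h : ω = ω' then 0
  else (1 / 2 : ℝ) ^ (Nat.find (Function.ne_iff.mp h) + 1)

/-- The product topology on the path space (with `X` discrete). -/
def prodTop (X : Type) : TopologicalSpace (ℕ → X) :=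
  @Pi.topologicalSpace ℕ (fun _ => X) (fun _ => ⊥)

/-!
The pointwise supremum of all global upper expectations that satisfy P1–P5 satisfies them
again (P1 as soon as one model exists) and dominates every model, so it is enough to build one
model. We take the inner approximation
`Ē(f|s) = inf_d sup_{m,c} V^m (z ↦ clamp_{d,c} (inf_{Γ(z)} f)) (s)`, where `V` is backward
induction with the local models `Q̄_z`. On finitary gambles it reduces to backward induction,
which gives P1 and P3; P2 and P4 are immediate. P5 is a Fatou property: by Hahn–Banach, choose at
every situation a mass function dominated by `Q̄_z` that attains `Q̄_z` on the values of the
backward induction; the resulting precise tree is realised on `[0,1)` with Lebesgue measure by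
nested intervals, and dominated convergence there gives `Ē(f|s) ≤ limsup Ē(f_n|s)`.
-/

end UEPaper

namespace UEPaper

open Set

section Paths

variable {X : Type}

@[simp]
lemma length_prefixList (ω : Path X) (k : ℕ) : (prefixList ω k).length = k := by
  simp [prefixList]

@[simp]
lemma getElem_prefixList (ω : Path X) (k i : ℕ) (h : i < (prefixList ω k).length) :
    (prefixList ω k)[i] = ω i := by
  simp [prefixList]

lemma take_prefixList (ω : Path X) {j k : ℕ} (h : j ≤ k) :
    (prefixList ω k).take j = prefixList ω j := by
  simp [prefixList, ← List.map_take, List.take_range, Nat.min_eq_left h]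

lemma mem_cyl_prefixList (ω : Path X) (k : ℕ) : ω ∈ cyl (prefixList ω k) := by
  simp [cyl]

lemma prefixList_of_mem_cyl {ω : Path X} {z : List X} (hω : ω ∈ cyl z) {k : ℕ}
    (hk : k ≤ z.length) : prefixList ω k = z.take k := by
  rw [← take_prefixList ω hk, hω]

lemma cyl_anti {z z' : List X} (h : z <+: z') : cyl z' ⊆ cyl z := fun ω hω => by
  show prefixList ω z.length = z
  rw [prefixList_of_mem_cyl hω h.length_le, ← List.prefix_iff_eq_take.1 h]

lemma mem_cyl_append_singleton {ω : Path X} {s : List X} {x : X} (hω : ω ∈ cyl (s ++ [x])) :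
    ω s.length = x := by
  simpa [prefixList] using congrArg (·[s.length]?) hω

lemma apply_eq_of_prefixList_eq {ω ω' : Path X} {k i : ℕ} (h : prefixList ω k = prefixList ω' k)
    (hi : i < k) : ω i = ω' i := by
  simpa [prefixList, hi] using congrArg (·[i]?) h

lemma NMeas.eq_of_mem_cyl {n : ℕ} {f : Path X → EReal} (hf : NMeas n f) {z : List X}
    (hn : n ≤ z.length) {ω ω' : Path X} (hω : ω ∈ cyl z) (hω' : ω' ∈ cyl z) : f ω = f ω' :=
  hf ω ω' (by rw [prefixList_of_mem_cyl hω hn, prefixList_of_mem_cyl hω' hn])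

variable [Nonempty X]

noncomputable def extend (z : List X) : Path X := fun i => z.getD i (Classical.arbitrary X)

lemma extend_mem_cyl (z : List X) : extend z ∈ cyl z := by
  refine List.ext_getElem (by simp) fun i h _ => ?_
  simp only [getElem_prefixList, extend]
  exact List.getD_eq_getElem _ _ (by simpa using h)

end Paths

section CylInf

variable {X : Type}

noncomputable def cylInf (f : Path X → EReal) (z : List X) : EReal := ⨅ ω ∈ cyl z, f ω

variable {f g : Path X → EReal} {z : List X}

lemma cylInf_le {ω : Path X} (hω : ω ∈ cyl z) : cylInf f z ≤ f ω := biInf_le f hω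

lemma le_cylInf {a : EReal} (h : ∀ ω ∈ cyl z, a ≤ f ω) : a ≤ cylInf f z := le_iInf₂ h

lemma cylInf_mono (h : ∀ ω ∈ cyl z, f ω ≤ g ω) : cylInf f z ≤ cylInf g z :=
  iInf₂_mono h

lemma cylInf_congr (h : ∀ ω ∈ cyl z, f ω = g ω) : cylInf f z = cylInf g z :=
  le_antisymm (cylInf_mono fun ω hω => (h ω hω).le) (cylInf_mono fun ω hω => (h ω hω).ge)

lemma cylInf_le_cylInf_of_prefix {z' : List X} (h : z <+: z') : cylInf f z ≤ cylInf f z' :=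
  biInf_mono fun _ hω => cyl_anti h hω

lemma NMeas.cylInf_eq {n : ℕ} (hf : NMeas n f) (hn : n ≤ z.length) {ω : Path X}
    (hω : ω ∈ cyl z) : cylInf f z = f ω :=
  le_antisymm (cylInf_le hω) (le_cylInf fun _ hω' => (hf.eq_of_mem_cyl hn hω hω').le)

lemma NMeas.cylInf_eq_of_prefix [Nonempty X] {n : ℕ} (hf : NMeas n f) (hn : n ≤ z.length)
    {z' : List X} (h : z <+: z') : cylInf f z' = cylInf f z := by
  rw [hf.cylInf_eq (hn.trans h.length_le) (extend_mem_cyl z'),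
    hf.cylInf_eq hn (cyl_anti h (extend_mem_cyl z'))]

section Bounded

variable [Nonempty X] {B : ℝ} (hB : ∀ ω, -(B : EReal) ≤ f ω ∧ f ω ≤ B)
include hB

lemma cylInf_mem_Icc :
    -(B : EReal) ≤ cylInf f z ∧ cylInf f z ≤ B :=
  ⟨le_cylInf fun ω _ => (hB ω).1, (cylInf_le (extend_mem_cyl z)).trans (hB _).2⟩

lemma coe_toReal_cylInf (z : List X) : ((cylInf f z).toReal : EReal) = cylInf f z := by
  obtain ⟨h1, h2⟩ := cylInf_mem_Icc (z := z) hB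
  exact EReal.coe_toReal (ne_top_of_le_ne_top (EReal.coe_ne_top B) h2)
    (ne_bot_of_le_ne_bot (by simp) h1)

lemma abs_toReal_cylInf_le (z : List X) : |(cylInf f z).toReal| ≤ B := by
  have h := cylInf_mem_Icc (z := z) hB
  rw [← coe_toReal_cylInf hB z, ← EReal.coe_neg, EReal.coe_le_coe_iff, EReal.coe_le_coe_iff] at h
  exact abs_le.2 h

end Bounded

end CylInf

section Clamp

/-- Constantly `c` when `c < d`. -/
noncomputable def clamp (d c : ℝ) (x : EReal) : ℝ := ((x ⊔ d) ⊓ c).toReal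

variable {d c : ℝ} {x : EReal}

lemma coe_clamp : (clamp d c x : EReal) = (x ⊔ d) ⊓ c := by
  refine EReal.coe_toReal (ne_top_of_le_ne_top (EReal.coe_ne_top c) inf_le_right) ?_
  exact ne_bot_of_le_ne_bot (EReal.coe_ne_bot (min d c)) (by simp)

lemma clamp_mono : Monotone (clamp d c) := fun x y h => by
  simpa [← EReal.coe_le_coe_iff, coe_clamp] using inf_le_inf_right _ (sup_le_sup_right h _)

lemma clamp_le_clamp_of_le (d' : ℝ) (hx : (d : EReal) ≤ x) : clamp d c x ≤ clamp d' c x := by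
  rw [← EReal.coe_le_coe_iff, coe_clamp, coe_clamp, sup_of_le_left hx]
  exact inf_le_inf_right _ le_sup_left

lemma abs_clamp_le : |clamp d c x| ≤ max |d| |c| := by
  have h1 : min d c ≤ clamp d c x := by
    rw [← EReal.coe_le_coe_iff, coe_clamp, EReal.coe_strictMono.monotone.map_min]
    exact inf_le_inf_right _ le_sup_right
  have h2 : clamp d c x ≤ c := by
    rw [← EReal.coe_le_coe_iff, coe_clamp]
    exact inf_le_right
  have h3 : -max |d| |c| ≤ min d c :=
    le_min (by linarith [neg_abs_le d, le_max_left |d| |c|])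
      (by linarith [neg_abs_le c, le_max_right |d| |c|])
  exact abs_le.2 ⟨h3.trans h1, h2.trans ((le_abs_self c).trans (le_max_right _ _))⟩

lemma continuous_clamp : Continuous (clamp d c) := by
  rw [continuous_iff_continuousAt]
  intro x
  have hx : (x ⊔ d) ⊓ c ≠ ⊤ ∧ (x ⊔ d) ⊓ c ≠ ⊥ := by
    rw [← coe_clamp]; exact ⟨EReal.coe_ne_top _, EReal.coe_ne_bot _⟩
  exact (EReal.tendsto_toReal hx.1 hx.2).comp
    ((continuous_id.max continuous_const).min continuous_const).continuousAt

lemma clamp_coe_le {v : ℝ} (h : d ≤ v) : clamp d c v ≤ v := by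
  rw [← EReal.coe_le_coe_iff, coe_clamp, sup_of_le_left (EReal.coe_le_coe_iff.2 h)]
  exact inf_le_left

lemma clamp_coe {v : ℝ} (hd : d ≤ v) (hc : v ≤ c) : clamp d c v = v := by
  rw [clamp, sup_of_le_left (EReal.coe_le_coe_iff.2 hd), inf_of_le_left (EReal.coe_le_coe_iff.2 hc),
    EReal.toReal_coe]

end Clamp

section Backward

variable {X : Type} {P P' : List X → (X → ℝ) → ℝ}

def backward (P : List X → (X → ℝ) → ℝ) : ℕ → (List X → ℝ) → List X → ℝ
  | 0, g, t => g t
  | m + 1, g, t => P t fun x => backward P m g (t ++ [x])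

lemma backward_succ (m : ℕ) (g : List X → ℝ) (t : List X) :
    backward P (m + 1) g t = P t fun x => backward P m g (t ++ [x]) := rfl

lemma backward_mono (hP : ∀ t, Monotone (P t)) {m : ℕ} {g g' : List X → ℝ} {t : List X}
    (h : ∀ z, t <+: z → z.length = t.length + m → g z ≤ g' z) :
    backward P m g t ≤ backward P m g' t := by
  induction m generalizing t with
  | zero => exact h t (List.prefix_refl t) rfl
  | succ m ih =>
    refine hP t fun x => ih fun z hz hl => h z ((t.prefix_append [x]).trans hz) ?_
    simp only [List.length_append, List.length_singleton] at hl
    omega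

lemma backward_congr {m : ℕ} {g g' : List X → ℝ} {t : List X}
    (h : ∀ z, t <+: z → z.length = t.length + m → g z = g' z) :
    backward P m g t = backward P m g' t := by
  induction m generalizing t with
  | zero => exact h t (List.prefix_refl t) rfl
  | succ m ih =>
    refine congrArg (P t) <| funext fun x =>
      ih fun z hz hl => h z ((t.prefix_append [x]).trans hz) ?_
    simp only [List.length_append, List.length_singleton] at hl
    omega

lemma backward_const (hP : ∀ t c, P t (fun _ => c) = c) (m : ℕ) (c : ℝ) (t : List X) :
    backward P m (fun _ => c) t = c := by
  induction m generalizing t with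
  | zero => rfl
  | succ m ih => simp only [backward_succ, ih, hP]

lemma le_backward_of_le (hP : ∀ t, Monotone (P t)) (hc : ∀ t c, P t (fun _ => c) = c)
    {m : ℕ} {g : List X → ℝ} {t : List X} {a : ℝ}
    (h : ∀ z, t <+: z → z.length = t.length + m → a ≤ g z) : a ≤ backward P m g t :=
  (backward_const hc m a t).ge.trans (backward_mono hP h)

lemma backward_le_of_le (hP : ∀ t, Monotone (P t)) (hc : ∀ t c, P t (fun _ => c) = c)
    {m : ℕ} {g : List X → ℝ} {t : List X} {a : ℝ}
    (h : ∀ z, t <+: z → z.length = t.length + m → g z ≤ a) : backward P m g t ≤ a :=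
  (backward_mono hP h).trans (backward_const hc m a t).le

lemma backward_le_backward (hP' : ∀ t, Monotone (P' t)) (h : ∀ t u, P t u ≤ P' t u)
    (m : ℕ) (g : List X → ℝ) (t : List X) : backward P m g t ≤ backward P' m g t := by
  induction m generalizing t with
  | zero => rfl
  | succ m ih => exact (h _ _).trans (hP' t fun x => ih (t ++ [x]))

lemma backward_of_harmonic {W : List X → ℝ} {t : List X}
    (hW : ∀ z, t <+: z → P z (fun x => W (z ++ [x])) = W z) (m : ℕ) :
    backward P m W t = W t := by
  induction m generalizing t with
  | zero => rfl
  | succ m ih =>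
    rw [backward_succ, ← hW t (List.prefix_refl t)]
    exact congrArg (P t) (funext fun x => ih fun z hz => hW z ((t.prefix_append [x]).trans hz))

lemma backward_eq_of_step_eq {N : ℕ} {g : List X → ℝ}
    (h : ∀ z, P z (fun x => backward P' (N - (z.length + 1)) g (z ++ [x])) =
      P' z (fun x => backward P' (N - (z.length + 1)) g (z ++ [x])))
    {m : ℕ} {t : List X} (hm : t.length + m = N) : backward P m g t = backward P' m g t := by
  induction m generalizing t with
  | zero => rfl
  | succ m ih =>
    have ht := h t
    rw [show N - (t.length + 1) = m by omega] at ht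
    rw [backward_succ, backward_succ, ← ht]
    exact congrArg (P t) (funext fun x => ih (by simp; omega))

end Backward

namespace UpperExpTree

variable {X : Type} [Fintype X] [Nonempty X] (Q : UpperExpTree X) (t : List X)

lemma le_of_forall_le {u : X → ℝ} {a : ℝ} (h : ∀ x, u x ≤ a) : Q.Q t u ≤ a :=
  (Q.le_sup t u).trans (ciSup_le h)

lemma map_zero : Q.Q t 0 = 0 := by
  simpa using Q.pos_homog t 0 0 le_rfl

lemma neg_neg_le (u : X → ℝ) : -Q.Q t (-u) ≤ Q.Q t u := by
  have h := Q.subadd t u (-u)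
  rw [add_neg_cancel, map_zero] at h
  linarith

lemma const (c : ℝ) : Q.Q t (fun _ => c) = c := by
  have h : Q.Q t (-fun _ => c) ≤ -c := Q.le_of_forall_le t fun _ => le_rfl
  linarith [Q.neg_neg_le t (fun _ => c), Q.le_of_forall_le t (u := fun _ => c) fun _ => le_rfl]

lemma mono : Monotone (Q.Q t) := fun u v h => by
  have h' := Q.subadd t v (u - v)
  rw [add_sub_cancel] at h'
  linarith [Q.le_of_forall_le t (u := u - v) fun x => sub_nonpos.2 (h x)]

/-- Hahn–Banach, from the functional `c • v ↦ c * Q.Q t v` on the span of `v`. -/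
theorem exists_linearMap_le_eq (v : X → ℝ) :
    ∃ φ : (X → ℝ) →ₗ[ℝ] ℝ, (∀ u, φ u ≤ Q.Q t u) ∧ φ v = Q.Q t v := by
  have hv : ∀ c : ℝ, c • v = 0 → (RingHom.id ℝ) c • Q.Q t v = 0 := by
    intro c hc
    rcases smul_eq_zero.1 hc with rfl | rfl
    · simp
    · simp [map_zero]
  set φ₀ := LinearPMap.mkSpanSingleton' v (Q.Q t v) hv
  have hdom : φ₀.domain = Submodule.span ℝ {v} := LinearPMap.domain_mkSpanSingleton v _ hv
  have hφ₀ : ∀ u : φ₀.domain, φ₀ u ≤ Q.Q t u := by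
    rintro ⟨u, hu⟩
    obtain ⟨c, rfl⟩ := Submodule.mem_span_singleton.1 (hdom ▸ hu)
    rw [LinearPMap.mkSpanSingleton'_apply, RingHom.id_apply, smul_eq_mul]
    rcases le_or_gt 0 c with hc | hc
    · exact (Q.pos_homog t c v hc).ge
    · have h := Q.pos_homog t (-c) v (by linarith)
      rw [neg_smul] at h
      linarith [Q.neg_neg_le t (c • v)]
  obtain ⟨φ, hφv, hφQ⟩ := exists_extension_of_le_sublinear φ₀ (Q.Q t)
    (fun c hc u => Q.pos_homog t c u hc.le) (Q.subadd t) hφ₀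
  refine ⟨φ, hφQ, ?_⟩
  rw [hφv ⟨v, hdom ▸ Submodule.mem_span_singleton_self v⟩]
  exact LinearPMap.mkSpanSingleton'_apply_self v (Q.Q t v) hv _

theorem exists_pmf_le_eq (v : X → ℝ) :
    ∃ p : X → ℝ, (∀ x, 0 ≤ p x) ∧ ∑ x, p x = 1 ∧ (∀ u, ∑ x, p x * u x ≤ Q.Q t u) ∧
      ∑ x, p x * v x = Q.Q t v := by
  classical
  obtain ⟨φ, hφQ, hφv⟩ := Q.exists_linearMap_le_eq t v
  set p : X → ℝ := fun x => φ fun j => if x = j then 1 else 0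
  have hφ : ∀ u, φ u = ∑ x, p x * u x := fun u => by
    rw [LinearMap.pi_apply_eq_sum_univ φ u]
    simp only [smul_eq_mul, mul_comm, p]
  refine ⟨p, fun x => ?_, ?_, fun u => hφ u ▸ hφQ u, hφ v ▸ hφv⟩
  · have h := hφQ (-fun j => if x = j then 1 else 0)
    have h' : Q.Q t (-fun j => if x = j then (1 : ℝ) else 0) ≤ 0 :=
      Q.le_of_forall_le t fun y => by by_cases hxy : x = y <;> simp [hxy]
    rw [map_neg] at h
    simp only [p]
    linarith
  · have h1 := hφQ fun _ => 1
    have h2 := hφQ fun _ => -1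
    rw [Q.const, hφ] at h1 h2
    simp only [mul_one, mul_neg, Finset.sum_neg_distrib] at h1 h2
    linarith

end UpperExpTree

section Coding

variable {X : Type}

noncomputable def cellLen (q : List X → X → ℝ) : List X → List X → ℝ
  | _, [] => 1
  | t, x :: r => q t x * cellLen q (t ++ [x]) r

lemma cellLen_nonneg {q : List X → X → ℝ} (hq0 : ∀ t x, 0 ≤ q t x) {t r : List X} :
    0 ≤ cellLen q t r := by
  induction r generalizing t with
  | nil => exact zero_le_one
  | cons x r ih => exact mul_nonneg (hq0 t x) ih

variable [Fintype X]

noncomputable def idx (x : X) : ℕ := Fintype.equivFin X x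

lemma idx_injective : Function.Injective (idx (X := X)) := fun _ _ h =>
  (Fintype.equivFin X).injective (Fin.ext h)

noncomputable def pmfSeq (p : X → ℝ) (i : ℕ) : ℝ :=
  if h : i < Fintype.card X then p ((Fintype.equivFin X).symm ⟨i, h⟩) else 0

noncomputable def pmfCum (p : X → ℝ) (j : ℕ) : ℝ := ∑ i ∈ Finset.range j, pmfSeq p i

def pmfIco (p : X → ℝ) (x : X) : Set ℝ := Ico (pmfCum p (idx x)) (pmfCum p (idx x + 1))

variable {p : X → ℝ}

lemma pmfCum_succ_idx (x : X) : pmfCum p (idx x + 1) = pmfCum p (idx x) + p x := by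
  rw [pmfCum, Finset.sum_range_succ, pmfSeq, dif_pos (show idx x < _ from Fin.is_lt _)]
  simp [idx, pmfCum]

lemma pmfCum_mono (hp : ∀ x, 0 ≤ p x) : Monotone (pmfCum p) := fun _ _ hij =>
  Finset.sum_le_sum_of_subset_of_nonneg (Finset.range_mono hij) fun i _ _ => by
    unfold pmfSeq
    split_ifs
    exacts [hp _, le_rfl]

lemma pmfCum_eq_one (hp : ∑ x, p x = 1) {j : ℕ} (hj : Fintype.card X ≤ j) : pmfCum p j = 1 := by
  rw [pmfCum, ← Finset.sum_range_add_sum_Ico _ hj,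
    Finset.sum_eq_zero (s := Finset.Ico _ _) fun i hi => dif_neg (by simp at hi; omega), add_zero,
    ← Fin.sum_univ_eq_sum_range, ← hp, ← (Fintype.equivFin X).symm.sum_comp]
  exact Finset.sum_congr rfl fun i _ => dif_pos i.is_lt

lemma pmfIco_subset (hp0 : ∀ x, 0 ≤ p x) (hp1 : ∑ x, p x = 1) (x : X) :
    pmfIco p x ⊆ Ico 0 1 := by
  refine Ico_subset_Ico ?_ ?_
  · simpa [pmfCum] using pmfCum_mono hp0 (Nat.zero_le (idx x))
  · rw [← pmfCum_eq_one hp1 le_rfl]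
    exact pmfCum_mono hp0 (Fin.is_lt _)

lemma pmfIco_disjoint (hp0 : ∀ x, 0 ≤ p x) {x y : X} (hxy : x ≠ y) :
    Disjoint (pmfIco p x) (pmfIco p y) :=
  (pmfCum_mono hp0).pairwise_disjoint_on_Ico_succ (idx_injective.ne hxy)

lemma exists_mem_pmfIco (hp1 : ∑ x, p x = 1) {u : ℝ} (hu : u ∈ Ico 0 1) :
    ∃ x, u ∈ pmfIco p x := by
  have hex : ∃ j, u < pmfCum p j := ⟨_, (pmfCum_eq_one hp1 le_rfl).symm ▸ hu.2⟩
  have hj0 : Nat.find hex ≠ 0 := fun h => by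
    have := Nat.find_spec hex
    rw [h] at this
    simp only [pmfCum, Finset.range_zero, Finset.sum_empty] at this
    exact absurd hu.1 (not_le.2 this)
  have hjc : Nat.find hex - 1 < Fintype.card X := by
    by_contra h
    exact Nat.find_min hex (Nat.sub_one_lt hj0)
      ((pmfCum_eq_one hp1 (not_lt.1 h)).symm ▸ hu.2)
  refine ⟨(Fintype.equivFin X).symm ⟨_, hjc⟩, ?_⟩
  have hidx : idx ((Fintype.equivFin X).symm ⟨_, hjc⟩) = Nat.find hex - 1 := by simp [idx]
  rw [pmfIco, hidx, Nat.sub_add_cancel (Nat.one_le_iff_ne_zero.2 hj0)]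
  exact ⟨not_lt.1 (Nat.find_min hex (Nat.sub_one_lt hj0)), Nat.find_spec hex⟩

variable (q : List X → X → ℝ)

def pmfStep (t : List X) (u : X → ℝ) : ℝ := ∑ x, q t x * u x

noncomputable def cellStart : List X → List X → ℝ
  | _, [] => 0
  | t, x :: r => pmfCum (q t) (idx x) + q t x * cellStart (t ++ [x]) r

/-- The cell of `r` below `t` has length the `q`-probability of reaching `t ++ r` from `t`; the
cell of `x :: r` is the cell of `r` below `t ++ [x]`, rescaled into `pmfIco (q t) x`, the slot of
length `q t x` that `x` occupies in `[0,1)`. -/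
def cell (t r : List X) : Set ℝ := Ico (cellStart q t r) (cellStart q t r + cellLen q t r)

variable {q} {t r : List X}

lemma measurableSet_cell : MeasurableSet (cell q t r) := measurableSet_Ico

lemma cell_nil : cell q t [] = Ico 0 1 := by simp [cell, cellStart, cellLen]

lemma cell_singleton (y : X) : cell q t [y] = pmfIco (q t) y := by
  simp [cell, cellStart, cellLen, pmfIco, pmfCum_succ_idx]

variable (hq0 : ∀ t x, 0 ≤ q t x) (hq1 : ∀ t, ∑ x, q t x = 1)
include hq0

lemma mem_cell_cons {x : X} {u : ℝ} : u ∈ cell q t (x :: r) ↔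
    0 < q t x ∧ (u - pmfCum (q t) (idx x)) / q t x ∈ cell q (t ++ [x]) r := by
  simp only [cell, cellStart, cellLen, mem_Ico]
  have hl : 0 ≤ cellLen q (t ++ [x]) r := cellLen_nonneg hq0
  constructor
  · rintro ⟨h1, h2⟩
    have hp : 0 < q t x := (hq0 t x).lt_of_ne fun h => by rw [← h] at h1 h2; linarith
    rw [le_div_iff₀ hp, div_lt_iff₀ hp]
    exact ⟨hp, by linarith, by linarith⟩
  · rintro ⟨hp, h1, h2⟩
    rw [le_div_iff₀ hp] at h1
    rw [div_lt_iff₀ hp] at h2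
    constructor <;> linarith

lemma cell_cons_subset {x : X} (h : cell q (t ++ [x]) r ⊆ Ico 0 1) :
    cell q t (x :: r) ⊆ pmfIco (q t) x := fun u hu => by
  obtain ⟨hp, hv⟩ := (mem_cell_cons hq0).1 hu
  obtain ⟨h1, h2⟩ := h hv
  rw [le_div_iff₀ hp, zero_mul] at h1
  rw [div_lt_iff₀ hp, one_mul] at h2
  rw [pmfIco, pmfCum_succ_idx]
  constructor <;> linarith

include hq1

lemma cell_subset_Ico (t r : List X) : cell q t r ⊆ Ico 0 1 := by
  induction r generalizing t with
  | nil => exact cell_nil.subset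
  | cons x r ih => exact (cell_cons_subset hq0 (ih _)).trans (pmfIco_subset (hq0 t) (hq1 t) x)

lemma eq_of_mem_cell {r' : List X} {u : ℝ} (hl : r.length = r'.length) (hu : u ∈ cell q t r)
    (hu' : u ∈ cell q t r') : r = r' := by
  induction r generalizing t r' u with
  | nil => exact (List.length_eq_zero_iff.1 hl.symm).symm
  | cons x r ih =>
    obtain _ | ⟨x', r'⟩ := r'
    · simp at hl
    obtain rfl : x = x' := by
      by_contra hne
      exact Set.disjoint_left.1 (pmfIco_disjoint (hq0 t) hne)
        (cell_cons_subset hq0 (cell_subset_Ico hq0 hq1 _ _) hu)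
        (cell_cons_subset hq0 (cell_subset_Ico hq0 hq1 _ _) hu')
    rw [ih (by simpa using hl) ((mem_cell_cons hq0).1 hu).2 ((mem_cell_cons hq0).1 hu').2]

lemma exists_mem_cell_append {u : ℝ} (hu : u ∈ cell q t r) : ∃ y, u ∈ cell q t (r ++ [y]) := by
  induction r generalizing t u with
  | nil =>
    rw [cell_nil] at hu
    simpa only [List.nil_append, cell_singleton] using exists_mem_pmfIco (hq1 t) hu
  | cons x r ih =>
    obtain ⟨hp, hv⟩ := (mem_cell_cons hq0).1 hu
    obtain ⟨y, hy⟩ := ih hv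
    exact ⟨y, (mem_cell_cons hq0).2 ⟨hp, hy⟩⟩

omit hq0 hq1

lemma backward_pmfStep (k : ℕ) (h : List X → ℝ) (t : List X) :
    backward (pmfStep q) k h t =
      ∑ w : Fin k → X, cellLen q t (List.ofFn w) * h (t ++ List.ofFn w) := by
  induction k generalizing t with
  | zero => simp [backward, cellLen]
  | succ k ih =>
    rw [backward_succ, pmfStep, ← (Fin.consEquiv fun _ => X).sum_comp, Fintype.sum_prod_type]
    refine Finset.sum_congr rfl fun x _ => ?_
    simp [ih, Finset.mul_sum, Fin.consEquiv, List.ofFn_succ, cellLen, mul_assoc]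

end Coding

section CodePath

variable {X : Type} [Fintype X] [Nonempty X] (q : List X → X → ℝ) (s : List X) (u : ℝ)

noncomputable def codeDigits : ℕ → List X
  | 0 => []
  | k + 1 => codeDigits k ++ [Classical.epsilon fun y => u ∈ cell q s (codeDigits k ++ [y])]

noncomputable def codePath : Path X :=
  fun i => (s ++ codeDigits q s u (i + 1)).getD i (Classical.arbitrary X)

variable {q s u}

@[simp]
lemma length_codeDigits (k : ℕ) : (codeDigits q s u k).length = k := by
  induction k with
  | zero => rfl
  | succ k ih => simp [codeDigits, ih]

lemma codeDigits_prefix {j k : ℕ} (h : j ≤ k) : codeDigits q s u j <+: codeDigits q s u k := by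
  induction k, h using Nat.le_induction with
  | base => exact List.prefix_refl _
  | succ k _ ih => exact ih.trans (List.prefix_append _ _)

lemma prefixList_codePath (k : ℕ) :
    prefixList (codePath q s u) (s.length + k) = s ++ codeDigits q s u k := by
  refine List.ext_getElem (by simp) fun i hi _ => ?_
  have hpre : ∀ {j}, j ≤ max (i + 1) k →
      s ++ codeDigits q s u j <+: s ++ codeDigits q s u (max (i + 1) k) :=
    fun hj => (List.prefix_append_right_inj s).2 (codeDigits_prefix hj)
  simp only [length_prefixList] at hi
  rw [getElem_prefixList, codePath, List.getD_eq_getElem _ _ (by simp; omega),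
    (hpre (le_max_left _ _)).getElem, (hpre (le_max_right _ _)).getElem]

lemma codePath_mem_cyl : codePath q s u ∈ cyl s := by
  show prefixList _ _ = _
  simpa [codeDigits] using prefixList_codePath (q := q) (s := s) (u := u) 0

variable (hq0 : ∀ t x, 0 ≤ q t x) (hq1 : ∀ t, ∑ x, q t x = 1)
include hq0 hq1

lemma mem_cell_codeDigits (hu : u ∈ Ico 0 1) (k : ℕ) : u ∈ cell q s (codeDigits q s u k) := by
  induction k with
  | zero => rwa [codeDigits, cell_nil]
  | succ k ih => exact Classical.epsilon_spec (exists_mem_cell_append hq0 hq1 ih)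

lemma eqOn_sum_indicator_cell (h : List X → ℝ) (k : ℕ) :
    EqOn (fun u => h (s ++ codeDigits q s u k))
      (fun u => ∑ w : Fin k → X, (cell q s (List.ofFn w)).indicator
        (fun _ => h (s ++ List.ofFn w)) u) (Ico 0 1) := by
  intro u hu
  obtain ⟨w₀, hw₀⟩ : ∃ w₀ : Fin k → X, List.ofFn w₀ = codeDigits q s u k := by
    have hl := length_codeDigits (q := q) (s := s) (u := u) k
    generalize codeDigits q s u k = r at hl
    subst hl
    exact ⟨r.get, List.ofFn_get r⟩
  have hmem := mem_cell_codeDigits (s := s) hq0 hq1 hu k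
  dsimp only
  rw [Finset.sum_eq_single w₀, hw₀, indicator_of_mem hmem]
  · intro w _ hw
    refine indicator_of_notMem (fun hw' => hw (List.ofFn_injective ?_)) _
    rw [hw₀]
    exact (eq_of_mem_cell hq0 hq1 (by simp) hmem hw').symm
  · simp

lemma integrable_codeDigits (h : List X → ℝ) (k : ℕ) :
    Integrable (fun u => h (s ++ codeDigits q s u k)) (volume.restrict (Ico 0 1)) := by
  refine (integrable_congr ?_).2
    (integrable_finsetSum Finset.univ fun (w : Fin k → X) _ =>
      (integrable_const (h (s ++ List.ofFn w))).indicator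
        (measurableSet_cell (q := q) (t := s) (r := List.ofFn w)))
  exact ae_restrict_of_forall_mem measurableSet_Ico (eqOn_sum_indicator_cell hq0 hq1 h k)

lemma integral_codeDigits (h : List X → ℝ) (k : ℕ) :
    ∫ u in Ico 0 1, h (s ++ codeDigits q s u k) = backward (pmfStep q) k h s := by
  rw [setIntegral_congr_fun measurableSet_Ico (eqOn_sum_indicator_cell hq0 hq1 h k),
    integral_finsetSum Finset.univ fun (w : Fin k → X) _ =>
      (integrable_const (h (s ++ List.ofFn w))).indicator measurableSet_cell,
    backward_pmfStep]
  refine Finset.sum_congr rfl fun w _ => ?_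
  rw [integral_indicator_const _ measurableSet_cell, smul_eq_mul,
    measureReal_restrict_apply measurableSet_cell,
    inter_eq_left.2 (cell_subset_Ico hq0 hq1 _ _), cell,
    Real.volume_real_Ico_of_le (by linarith [cellLen_nonneg hq0 (t := s) (r := List.ofFn w)])]
  ring

/-- Dominated convergence for the precise tree `q`, realised on `[0,1)` by `codePath`. -/
theorem backward_pmfStep_le_of_tendsto {m : ℕ} {g : List X → ℝ} {n : ℕ → ℕ}
    {e : ℕ → List X → ℝ} {H : Path X → ℝ} {C : ℝ} (hC : ∀ k z, |e k z| ≤ C)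
    (he : ∀ ω ∈ cyl s, Tendsto (fun k => e k (prefixList ω (s.length + n k))) atTop (𝓝 (H ω)))
    (hg : ∀ ω ∈ cyl s, g (prefixList ω (s.length + m)) ≤ H ω) :
    ∃ L, Tendsto (fun k => backward (pmfStep q) (n k) (e k) s) atTop (𝓝 L) ∧
      backward (pmfStep q) m g s ≤ L := by
  set μ := volume.restrict (Ico (0 : ℝ) 1)
  have hlim : ∀ u, Tendsto (fun k => e k (s ++ codeDigits q s u (n k))) atTop
      (𝓝 (H (codePath q s u))) := fun u => by
    simpa only [prefixList_codePath] using he _ codePath_mem_cyl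
  have hmeas : ∀ k, AEStronglyMeasurable (fun u => e k (s ++ codeDigits q s u (n k))) μ :=
    fun k => (integrable_codeDigits hq0 hq1 (e k) (n k)).aestronglyMeasurable
  have hH : Integrable (fun u => H (codePath q s u)) μ :=
    (integrable_const C).mono' (aestronglyMeasurable_of_tendsto_ae atTop hmeas (ae_of_all _ hlim))
      (ae_of_all _ fun u => le_of_tendsto' (hlim u).norm fun k => hC k _)
  refine ⟨∫ u, H (codePath q s u) ∂μ, ?_, ?_⟩
  · simp_rw [← integral_codeDigits hq0 hq1]
    exact tendsto_integral_of_dominated_convergence (fun _ => C) hmeas (integrable_const C)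
      (fun k => ae_of_all _ fun u => hC k _) (ae_of_all _ hlim)
  · rw [← integral_codeDigits hq0 hq1]
    refine integral_mono (integrable_codeDigits hq0 hq1 g m) hH fun u => ?_
    simpa only [prefixList_codePath] using hg _ (codePath_mem_cyl (u := u))

end CodePath

/-- Fatou's lemma for backward induction with `Q`: choose a precise tree dominated by `Q` that
attains `Q` along the backward induction of `g`. -/
theorem UpperExpTree.backward_le_limsup {X : Type} [Fintype X] [Nonempty X] (Q : UpperExpTree X)
    {s : List X} {m : ℕ} {g : List X → ℝ} {n : ℕ → ℕ} {e : ℕ → List X → ℝ} {H : Path X → ℝ}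
    {C : ℝ} (hC : ∀ k z, |e k z| ≤ C)
    (he : ∀ ω ∈ cyl s, Tendsto (fun k => e k (prefixList ω (s.length + n k))) atTop (𝓝 (H ω)))
    (hg : ∀ ω ∈ cyl s, g (prefixList ω (s.length + m)) ≤ H ω) :
    (backward Q.Q m g s : EReal) ≤
      limsup (fun k => (backward Q.Q (n k) (e k) s : EReal)) atTop := by
  choose q hq0 hq1 hqQ hqeq using fun z => Q.exists_pmf_le_eq z
    fun x => backward Q.Q (s.length + m - (z.length + 1)) g (z ++ [x])
  obtain ⟨L, hL, hgL⟩ := backward_pmfStep_le_of_tendsto hq0 hq1 hC he hg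
  calc (backward Q.Q m g s : EReal) = backward (pmfStep q) m g s := by
        rw [backward_eq_of_step_eq (P := pmfStep q) hqeq rfl]
    _ ≤ L := EReal.coe_le_coe_iff.2 hgL
    _ = limsup (fun k => (backward (pmfStep q) (n k) (e k) s : EReal)) atTop :=
        ((continuous_coe_real_ereal.tendsto L).comp hL).limsup_eq.symm
    _ ≤ _ := limsup_le_limsup (Eventually.of_forall fun k =>
        EReal.coe_le_coe_iff.2 (backward_le_backward Q.mono hqQ _ _ _))

section Model

variable {X : Type} [Fintype X] [Nonempty X] (Q : UpperExpTree X)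

noncomputable def innerUE (f : Path X → EReal) (s : List X) : EReal :=
  ⨅ d : ℝ, ⨆ (m : ℕ) (c : ℝ), (backward Q.Q m (fun z => clamp d c (cylInf f z)) s : EReal)

noncomputable def finValue (f : Path X → EReal) (n : ℕ) (t : List X) : ℝ :=
  backward Q.Q (n - t.length) (fun z => (cylInf f z).toReal) t

variable {Q}

lemma innerUE_mono {f g : Path X → EReal} (h : ∀ ω, f ω ≤ g ω) (s : List X) :
    innerUE Q f s ≤ innerUE Q g s :=
  iInf_mono fun _ => iSup₂_mono fun _ _ => EReal.coe_le_coe_iff.2 <|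
    backward_mono Q.mono fun _ _ _ => clamp_mono (cylInf_mono fun ω _ => h ω)

lemma innerUE_congr {f g : Path X → EReal} {s : List X} (h : ∀ ω ∈ cyl s, f ω = g ω) :
    innerUE Q f s = innerUE Q g s := by
  refine iInf_congr fun d => iSup_congr fun m => iSup_congr fun c => ?_
  rw [backward_congr fun z hz _ => by rw [cylInf_congr fun ω hω => h ω (cyl_anti hz hω)]]

lemma innerUE_eq_iSup {f : Path X → EReal} {b : ℝ} (hb : ∀ ω, (b : EReal) ≤ f ω) (s : List X) :
    innerUE Q f s =
      ⨆ (m : ℕ) (c : ℝ), (backward Q.Q m (fun z => clamp b c (cylInf f z)) s : EReal) :=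
  le_antisymm (iInf_le _ b) <| le_iInf fun d => iSup₂_mono fun _ _ => EReal.coe_le_coe_iff.2 <|
    backward_mono Q.mono fun _ _ _ => clamp_le_clamp_of_le d (le_cylInf fun ω _ => hb ω)

lemma NMeas.finValue_harmonic {f : Path X → EReal} {n : ℕ} (hn : NMeas n f) (z : List X) :
    Q.Q z (fun x => finValue Q f n (z ++ [x])) = finValue Q f n z := by
  rcases le_or_gt n z.length with hz | hz
  · have h : ∀ x, finValue Q f n (z ++ [x]) = (cylInf f z).toReal := fun x => by
      rw [finValue, show n - (z ++ [x]).length = 0 by simp; omega, backward,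
        hn.cylInf_eq_of_prefix hz (z.prefix_append [x])]
    simp only [h, Q.const]
    rw [finValue, Nat.sub_eq_zero_of_le hz]
    rfl
  · obtain ⟨k, hk⟩ : ∃ k, n - z.length = k + 1 := ⟨n - z.length - 1, by omega⟩
    rw [finValue, hk, backward_succ]
    refine congrArg _ (funext fun x => ?_)
    rw [finValue, show n - (z ++ [x]).length = k by simp; omega]

section Gamble

variable {f : Path X → EReal} {B : ℝ} (hB : ∀ ω, -(B : EReal) ≤ f ω ∧ f ω ≤ B)
include hB

lemma abs_finValue_le (n : ℕ) (t : List X) : |finValue Q f n t| ≤ B :=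
  abs_le.2 ⟨le_backward_of_le Q.mono Q.const fun z _ _ => (abs_le.1 (abs_toReal_cylInf_le hB z)).1,
    backward_le_of_le Q.mono Q.const fun z _ _ => (abs_le.1 (abs_toReal_cylInf_le hB z)).2⟩

theorem NMeas.innerUE_eq {n : ℕ} (hn : NMeas n f) (t : List X) :
    innerUE Q f t = finValue Q f n t := by
  have hb : ∀ ω, ((-B : ℝ) : EReal) ≤ f ω := fun ω => by rw [EReal.coe_neg]; exact (hB ω).1
  have hval : ∀ z, (cylInf f z).toReal ≤ finValue Q f n z := fun z =>
    le_backward_of_le Q.mono Q.const fun z' hz' _ => by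
      rw [← EReal.coe_le_coe_iff, coe_toReal_cylInf hB, coe_toReal_cylInf hB]
      exact cylInf_le_cylInf_of_prefix hz'
  have hclamp : ∀ c z, clamp (-B) c (cylInf f z) ≤ finValue Q f n z := fun c z => by
    rw [← coe_toReal_cylInf hB z]
    exact (clamp_coe_le (abs_le.1 (abs_toReal_cylInf_le hB z)).1).trans (hval z)
  rw [innerUE_eq_iSup hb]
  refine le_antisymm (iSup₂_le fun m c => EReal.coe_le_coe_iff.2 ?_) ?_
  · exact (backward_mono Q.mono fun z _ _ => hclamp c z).trans
      (backward_of_harmonic (fun z _ => hn.finValue_harmonic z) m).le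
  · refine le_iSup₂_of_le (n - t.length) B <|
      EReal.coe_le_coe_iff.2 (backward_congr fun z _ _ => ?_).le
    rw [← coe_toReal_cylInf hB z, EReal.toReal_coe]
    exact (clamp_coe (abs_le.1 (abs_toReal_cylInf_le hB z)).1
      (abs_le.1 (abs_toReal_cylInf_le hB z)).2).symm

lemma NMeas.innerUE_eq_one_step {s : List X} (hn : NMeas (s.length + 1) f) :
    innerUE Q f s = Q.Q s (fun x => (cylInf f (s ++ [x])).toReal) := by
  rw [hn.innerUE_eq hB, finValue, show s.length + 1 - s.length = 1 by omega]
  rfl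

end Gamble

lemma coe_bounds_of_abs_le {v B : ℝ} (h : |v| ≤ B) : -(B : EReal) ≤ v ∧ (v : EReal) ≤ B := by
  rw [← EReal.coe_neg, EReal.coe_le_coe_iff, EReal.coe_le_coe_iff]
  exact abs_le.1 h

theorem innerUE_of_next_state (f : X → ℝ) (s : List X) :
    innerUE Q (fun ω => (f (ω s.length) : EReal)) s = Q.Q s f := by
  obtain ⟨B, hB⟩ : ∃ B, ∀ x, |f x| ≤ B :=
    ⟨∑ x, |f x|, fun x => Finset.single_le_sum (fun y _ => abs_nonneg (f y)) (Finset.mem_univ x)⟩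
  have hn : NMeas (s.length + 1) fun ω => (f (ω s.length) : EReal) := fun ω ω' h => by
    simp only [apply_eq_of_prefixList_eq h (Nat.lt_succ_self _)]
  rw [hn.innerUE_eq_one_step fun ω => coe_bounds_of_abs_le (hB _)]
  refine congrArg (fun u => (Q.Q s u : EReal)) (funext fun x => ?_)
  rw [hn.cylInf_eq (by simp) (extend_mem_cyl _), mem_cyl_append_singleton (extend_mem_cyl _),
    EReal.toReal_coe]

theorem innerUE_le_innerUE_next (f : Path X → EReal) (hf : IsFinGamble f) (s : List X) :
    innerUE Q f s ≤ innerUE Q (fun ω => innerUE Q f (prefixList ω (s.length + 1))) s := by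
  obtain ⟨⟨n, hn⟩, B, hB⟩ := hf
  set F := fun ω => innerUE Q f (prefixList ω (s.length + 1))
  have hF : ∀ ω, F ω = finValue Q f n (prefixList ω (s.length + 1)) := fun ω => hn.innerUE_eq hB _
  have hFn : NMeas (s.length + 1) F := fun ω ω' h => by simp only [F, h]
  have hFB : ∀ ω, -(B : EReal) ≤ F ω ∧ F ω ≤ B := fun ω =>
    hF ω ▸ coe_bounds_of_abs_le (abs_finValue_le hB n _)
  rw [hFn.innerUE_eq_one_step hFB, hn.innerUE_eq hB, ← hn.finValue_harmonic s]
  refine le_of_eq (congrArg _ (congrArg _ (funext fun x => ?_)))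
  have hx : prefixList (extend (s ++ [x])) (s.length + 1) = s ++ [x] := by
    simpa [cyl] using extend_mem_cyl (s ++ [x])
  rw [hFn.cylInf_eq (by simp) (extend_mem_cyl _), hF, hx, EReal.toReal_coe]

theorem innerUE_le_limsup (s : List X) (fn : ℕ → Path X → EReal) (f : Path X → EReal)
    (hfn : ∀ k, IsFinGamble (fn k)) (hb : ∃ B : ℝ, ∀ k ω, (B : EReal) ≤ fn k ω)
    (hlim : ∀ ω, Tendsto (fun k => fn k ω) atTop (𝓝 (f ω))) :
    innerUE Q f s ≤ limsup (fun k => innerUE Q (fn k) s) atTop := by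
  obtain ⟨b, hb⟩ := hb
  choose n hn using fun k => (hfn k).1
  rw [innerUE_eq_iSup fun ω => ge_of_tendsto' (hlim ω) fun k => hb k ω]
  refine iSup₂_le fun m c => ?_
  have he : ∀ ω ∈ cyl s,
      Tendsto (fun k => clamp b c (cylInf (fn k) (prefixList ω (s.length + n k)))) atTop
        (𝓝 (clamp b c (f ω))) := fun ω _ => by
    have h : ∀ k, cylInf (fn k) (prefixList ω (s.length + n k)) = fn k ω := fun k =>
      (hn k).cylInf_eq (by simp) (mem_cyl_prefixList ω _)
    simp only [h]
    exact (continuous_clamp.tendsto _).comp (hlim ω)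
  refine (Q.backward_le_limsup (fun _ _ => abs_clamp_le) he
    fun ω _ => clamp_mono (cylInf_le (mem_cyl_prefixList ω _))).trans ?_
  refine limsup_le_limsup (Eventually.of_forall fun k => ?_)
  dsimp only
  rw [innerUE_eq_iSup (hb k)]
  exact le_iSup₂_of_le (n k) c le_rfl

theorem innerUE_axioms (Q : UpperExpTree X) : Axioms Q (innerUE Q) where
  p1 := innerUE_of_next_state
  p2 f _ _ := innerUE_congr fun _ hω => (indicator_of_mem hω f).symm
  p3 := innerUE_le_innerUE_next
  p4 _ _ h := innerUE_mono h
  p5 := innerUE_le_limsup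

end Model

theorem Axioms.iSup {X : Type} [Fintype X] [Nonempty X] {Q : UpperExpTree X}
    {E₀ : (Path X → EReal) → List X → EReal} (h₀ : Axioms Q E₀) :
    Axioms Q fun f s => ⨆ (E : (Path X → EReal) → List X → EReal) (_ : Axioms Q E), E f s where
  p1 f s := le_antisymm (iSup₂_le fun E hE => (hE.p1 f s).le) (le_iSup₂_of_le E₀ h₀ (h₀.p1 f s).ge)
  p2 f hf s := iSup_congr fun E => iSup_congr fun hE => hE.p2 f hf s
  p3 f hf s := iSup₂_le fun E hE => (hE.p3 f hf s).trans <| le_iSup₂_of_le E hE <|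
    hE.p4 _ _ (fun ω => le_iSup₂ (f := fun E (_ : Axioms Q E) => E f (prefixList ω (s.length + 1)))
      E hE) s
  p4 f g h s := iSup₂_mono fun E hE => hE.p4 f g h s
  p5 s fn f hfn hb hlim := iSup₂_le fun E hE => (hE.p5 s fn f hfn hb hlim).trans <|
    limsup_le_limsup (Eventually.of_forall fun k =>
      le_iSup₂ (f := fun E (_ : Axioms Q E) => E (fn k) s) E hE)

variable {X : Type} [Fintype X] [Nonempty X] [DecidableEq X]

theorem stmt0 (Q : UpperExpTree X) :
    ∃ Estar : (Path X → EReal) → List X → EReal, Axioms Q Estar ∧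
      ∀ E : (Path X → EReal) → List X → EReal, Axioms Q E →
        ∀ (f : Path X → EReal) (s : List X), E f s ≤ Estar f s :=
  ⟨_, (innerUE_axioms Q).iSup, fun E hE f s => le_iSup₂ (f := fun E (_ : Axioms Q E) => E f s) E hE⟩

end UEPaper
end

section
/- For every imprecise probability tree 𝒫, every situation s, and every pointwise nondecreasing sequence (f_n) of bounded-below global variables f_n: Ω → ℝ̄ with pointwise limit f = sup_n f_n, one has lim_{n→∞} Ē_𝒫(f_n|s) = Ē_𝒫(f|s). -/
/-!
For a fixed precise tree, the upper integral is continuous along nondecreasing sequences that are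
uniformly bounded below: take nearly optimal measurable majorants `gₙ ≥ fₙ`; their running infima
are nondecreasing majorants again, and the integral passes to their limit by monotone convergence
(for positive parts) and dominated convergence (for negative parts, bounded by the lower bound).
The measure-theoretic upper expectation is a supremum of such upper integrals, and suprema commute.
-/

open Filter MeasureTheory Topology
open scoped ENNReal

namespace UEPaper

variable {X : Type}

section UpperIntegral

variable (μ : Measure (Path X))

lemma posPart_mono : Monotone posPart := fun _ _ h => EReal.toENNReal_le_toENNReal h

lemma continuous_posPart : Continuous posPart := EReal.continuous_toENNReal

lemma integralE_mono {g₁ g₂ : Path X → EReal} (h : g₁ ≤ g₂) :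
    integralE μ g₁ ≤ integralE μ g₂ :=
  EReal.sub_le_sub
    (EReal.coe_ennreal_le_coe_ennreal_iff.2 (lintegral_mono fun ω => posPart_mono (h ω)))
    (EReal.coe_ennreal_le_coe_ennreal_iff.2
      (lintegral_mono fun ω => posPart_mono (EReal.neg_le_neg_iff.2 (h ω))))

lemma lintegral_posPart_neg_le {g : Path X → EReal} {B : ℝ} (hB : ∀ ω, (B : EReal) ≤ g ω) :
    ∫⁻ ω, posPart (-g ω) ∂μ ≤ posPart (-B) * μ Set.univ := by
  rw [← lintegral_const]
  exact lintegral_mono fun ω => posPart_mono (EReal.neg_le_neg_iff.2 (hB ω))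

lemma tendsto_integralE_iSup [IsFiniteMeasure μ] {h : ℕ → Path X → EReal}
    (hmeas : ∀ n, Measurable (h n)) (hmono : Monotone h) {B : ℝ}
    (hB : ∀ ω, (B : EReal) ≤ h 0 ω) :
    Tendsto (fun n => integralE μ (h n)) atTop (𝓝 (integralE μ fun ω => ⨆ n, h n ω)) := by
  have hB' : ∀ n ω, (B : EReal) ≤ h n ω := fun n ω => (hB ω).trans (hmono n.zero_le ω)
  have hlim : ∀ ω, Tendsto (fun n => h n ω) atTop (𝓝 (⨆ n, h n ω)) :=
    fun ω => tendsto_atTop_iSup fun _ _ hmn => hmono hmn ω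
  have hbound : posPart (-B) * μ Set.univ ≠ ∞ :=
    ENNReal.mul_ne_top (by simp [posPart]) (measure_ne_top μ _)
  have hpos : Tendsto (fun n => ∫⁻ ω, posPart (h n ω) ∂μ) atTop
      (𝓝 (∫⁻ ω, posPart (⨆ n, h n ω) ∂μ)) :=
    lintegral_tendsto_of_tendsto_of_monotone
      (fun n => (continuous_posPart.measurable.comp (hmeas n)).aemeasurable)
      (ae_of_all _ fun ω _ _ hmn => posPart_mono (hmono hmn ω))
      (ae_of_all _ fun ω => (continuous_posPart.tendsto _).comp (hlim ω))
  have hneg : Tendsto (fun n => ∫⁻ ω, posPart (-h n ω) ∂μ) atTop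
      (𝓝 (∫⁻ ω, posPart (-⨆ n, h n ω) ∂μ)) :=
    tendsto_lintegral_of_dominated_convergence (fun _ => posPart (-B))
      (fun n => (continuous_posPart.comp continuous_neg).measurable.comp (hmeas n))
      (fun n => ae_of_all _ fun ω => posPart_mono (EReal.neg_le_neg_iff.2 (hB' n ω)))
      (by rwa [lintegral_const])
      (ae_of_all _ fun ω =>
        ((continuous_posPart.comp continuous_neg).tendsto _).comp (hlim ω))
  have hneg_fin : ∫⁻ ω, posPart (-⨆ n, h n ω) ∂μ ≠ ∞ :=
    ne_top_of_le_ne_top hbound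
      (lintegral_posPart_neg_le μ fun ω => (hB ω).trans (le_iSup (fun n => h n ω) 0))
  -- `a - b` is `a + -b` in `EReal`, and addition is continuous away from `⊤ + ⊥`.
  have hsub := EReal.continuousAt_add
    (p := ((∫⁻ ω, posPart (⨆ n, h n ω) ∂μ : ℝ≥0∞),
      -((∫⁻ ω, posPart (-⨆ n, h n ω) ∂μ : ℝ≥0∞) : EReal)))
    (Or.inr (by simpa using hneg_fin)) (Or.inl (EReal.coe_ennreal_ne_bot _))
  exact hsub.tendsto.comp ((continuous_coe_ennreal_ereal.tendsto _).comp hpos |>.prodMk_nhds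
    ((continuous_neg.tendsto _).comp ((continuous_coe_ennreal_ereal.tendsto _).comp hneg)))

lemma upperInt_mono {f₁ f₂ : Path X → EReal} (h : f₁ ≤ f₂) :
    upperInt μ f₁ ≤ upperInt μ f₂ := by
  refine sInf_le_sInf ?_
  rintro _ ⟨g, hg, hgb, hfg, rfl⟩
  exact ⟨g, hg, hgb, fun ω => (h ω).trans (hfg ω), rfl⟩

lemma upperInt_iSup [IsFiniteMeasure μ] {f : ℕ → Path X → EReal} (hmono : Monotone f)
    {B : ℝ} (hB : ∀ ω, (B : EReal) ≤ f 0 ω) :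
    upperInt μ (fun ω => ⨆ n, f n ω) = ⨆ n, upperInt μ (f n) := by
  refine le_antisymm (le_of_forall_gt_imp_ge_of_dense fun c hc => ?_)
    (iSup_le fun n => upperInt_mono μ fun ω => le_iSup (fun m => f m ω) n)
  have hdom : ∀ n, ∃ g : Path X → EReal, Measurable g ∧ f n ≤ g ∧ integralE μ g < c := by
    intro n
    obtain ⟨_, ⟨g, hg, -, hfg, rfl⟩, hgc⟩ := sInf_lt_iff.1 ((le_iSup _ n).trans_lt hc)
    exact ⟨g, hg, hfg, hgc⟩
  choose g hgmeas hfg hgc using hdom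
  set h : ℕ → Path X → EReal := fun n ω => ⨅ m, g (n + m) ω
  have hfh : ∀ n, f n ≤ h n := fun n ω =>
    le_iInf fun m => (hmono (n.le_add_right m) ω).trans (hfg (n + m) ω)
  have hhmono : Monotone h := by
    refine monotone_nat_of_le_succ fun n ω => le_iInf fun m => ?_
    rw [Nat.succ_add_eq_add_succ]
    exact iInf_le _ _
  have hhmeas : ∀ n, Measurable (h n) := fun n => Measurable.iInf fun m => hgmeas (n + m)
  have hhB : ∀ ω, (B : EReal) ≤ h 0 ω := fun ω => (hB ω).trans (hfh 0 ω)
  calc upperInt μ (fun ω => ⨆ n, f n ω)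
      ≤ integralE μ (fun ω => ⨆ n, h n ω) :=
        sInf_le ⟨_, Measurable.iSup hhmeas,
          ⟨B, fun ω => (hhB ω).trans (le_iSup (fun n => h n ω) 0)⟩,
          fun ω => iSup_mono fun n => hfh n ω, rfl⟩
    _ ≤ c := le_of_tendsto' (tendsto_integralE_iSup μ hhmeas hhmono hhB) fun n =>
        ((integralE_mono μ fun ω => iInf_le _ 0).trans_lt (hgc n)).le

end UpperIntegral

lemma muUE_iSup [Fintype X] (Pm : PreciseTree X → List X → Measure (Path X))
    (hPm : ∀ p s, IsFiniteMeasure (Pm p s)) (P : ImpreciseTree X) (s : List X)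
    {f : ℕ → Path X → EReal} (hmono : Monotone f) {B : ℝ} (hB : ∀ ω, (B : EReal) ≤ f 0 ω) :
    muUE Pm P (fun ω => ⨆ n, f n ω) s = ⨆ n, muUE Pm P (f n) s := by
  calc muUE Pm P (fun ω => ⨆ n, f n ω) s
      = ⨆ (p : PreciseTree X) (_ : Compatible p P) (n : ℕ), upperInt (Pm p s) (f n) :=
        iSup_congr fun p => iSup_congr fun _ => upperInt_iSup _ hmono hB
    _ = ⨆ n, muUE Pm P (f n) s := by
        simp only [muUE]
        rw [iSup_comm]
        exact iSup_congr fun p => iSup_comm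

variable [Fintype X] [Nonempty X] [DecidableEq X]

theorem stmt2 (P : ImpreciseTree X)
    (Pm : PreciseTree X → List X → Measure (Path X))
    (hPm : ∀ (p : PreciseTree X) (s : List X), IsTreeMeasure p s (Pm p s))
    (s : List X) (fn : ℕ → Path X → EReal) (f : Path X → EReal)
    (hmono : Monotone fn)
    (hbb : ∀ n, ∃ B : ℝ, ∀ ω, (B : EReal) ≤ fn n ω)
    (hlim : ∀ ω, f ω = ⨆ n, fn n ω) :
    Tendsto (fun n => muUE Pm P (fn n) s) atTop (nhds (muUE Pm P f s)) := by
  obtain ⟨B, hB⟩ := hbb 0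
  rw [funext hlim, muUE_iSup Pm (fun p s => have := (hPm p s).1; inferInstance) P s hmono hB]
  exact tendsto_atTop_iSup fun m n hmn =>
    iSup₂_mono fun p _ => upperInt_mono _ (hmono hmn)

end UEPaper
end
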